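/- (Symmetric eigenbasis decomposition, scalar form, Proposition 2.) Under the hypotheses of the symmetric eigenbasis decomposition — Σ'(t) = J(t)Σ(t) + Σ(t)J(t)ᵀ + B(t), H = (J+Jᵀ)/2 = S Λ_H Sᵀ with S(s) orthogonal and differentiable near t and Λ_H(t) = diag(μ₁(t),…,μₙ(t)), K = (J−Jᵀ)/2, Σ_H = Sᵀ Σ S, B_H = Sᵀ B S, K_H = Sᵀ K S, M_S = (S')ᵀ S — and assuming additionally that Σ(t) is symmetric, each diagonal element σ_i(s) = (Σ_H(s))_{ii} is differentiable at t with σ_i'(t) = 2·μ_i(t)·σ_i(t) + (B_H(t))_{ii} + 2·∑_k ((K_H(t))_{ik} + (M_S(t))_{ik})·(Σ_H(t))_{ki}. -/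

import Mathlib

/-!
Differentiating `Σ_H = SᵀΣS` and inserting `S Sᵀ = 1` shows that `Σ_H` again satisfies a
Lyapunov equation, with drift `SᵀJS + S'ᵀS = Λ_H + K_H + M_S` and forcing `B_H`. For symmetric
`Σ_H` the diagonal of `A Σ_H + Σ_H Aᵀ` is twice that of `A Σ_H`, and the diagonal matrix
`Λ_H` contributes only `μ_i σ_i` to it.
-/

open Matrix

attribute [local instance] Matrix.normedAddCommGroup Matrix.normedSpace

section MatrixDeriv

variable {𝕜 : Type*} [NontriviallyNormedField 𝕜] {l m p : Type*} {t : 𝕜}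

theorem HasDerivAt.matrix_apply [Fintype p] {f : 𝕜 → Matrix m p 𝕜} {f' : Matrix m p 𝕜}
    (hf : HasDerivAt f f' t) (i : m) (j : p) :
    HasDerivAt (fun s => f s i j) (f' i j) t :=
  hasDerivAt_pi.1 (hasDerivAt_pi.1 hf i) j

theorem HasDerivAt.matrix_transpose [Fintype m] [Fintype p] {f : 𝕜 → Matrix m p 𝕜}
    {f' : Matrix m p 𝕜} (hf : HasDerivAt f f' t) : HasDerivAt (fun s => (f s)ᵀ) f'ᵀ t :=
  hasDerivAt_pi.2 fun i => hasDerivAt_pi.2 fun j => hf.matrix_apply j i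

theorem HasDerivAt.matrix_mul [Fintype m] [Fintype p] {f : 𝕜 → Matrix l m 𝕜}
    {g : 𝕜 → Matrix m p 𝕜} {f' : Matrix l m 𝕜} {g' : Matrix m p 𝕜}
    (hf : HasDerivAt f f' t) (hg : HasDerivAt g g' t) :
    HasDerivAt (fun s => f s * g s) (f' * g t + f t * g') t := by
  refine hasDerivAt_pi.2 fun i => hasDerivAt_pi.2 fun j => ?_
  simp only [Matrix.mul_apply, Matrix.add_apply, ← Finset.sum_add_distrib]
  exact HasDerivAt.fun_sum fun k _ => (hf.matrix_apply i k).mul (hg.matrix_apply k j)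

theorem HasDerivAt.matrix_transpose_mul_mul [Fintype m] [Fintype p] {S : 𝕜 → Matrix m p 𝕜}
    {X : 𝕜 → Matrix m m 𝕜} {S' : Matrix m p 𝕜} {X' : Matrix m m 𝕜}
    (hS : HasDerivAt S S' t) (hX : HasDerivAt X X' t) :
    HasDerivAt (fun s => (S s)ᵀ * X s * S s)
      (S'ᵀ * X t * S t + (S t)ᵀ * X' * S t + (S t)ᵀ * X t * S') t := by
  convert (hS.matrix_transpose.matrix_mul hX).matrix_mul hS using 1
  rw [Matrix.add_mul]

end MatrixDeriv

section Congruence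

variable {R n : Type*} [CommRing R] [Fintype n]

theorem transpose_mul_lyapunov_mul_of_orthogonal [DecidableEq n] {S S' J X B : Matrix n n R}
    (hS : Sᵀ * S = 1) :
    S'ᵀ * X * S + Sᵀ * (J * X + X * Jᵀ + B) * S + Sᵀ * X * S'
      = (Sᵀ * J * S + S'ᵀ * S) * (Sᵀ * X * S) + (Sᵀ * X * S) * (Sᵀ * J * S + S'ᵀ * S)ᵀ
        + Sᵀ * B * S := by
  have hS' : S * Sᵀ = 1 := mul_eq_one_comm.mp hS
  simp only [transpose_add, transpose_mul, transpose_transpose, Matrix.mul_add, Matrix.add_mul,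
    Matrix.mul_assoc]
  simp only [← Matrix.mul_assoc S, hS', Matrix.one_mul]
  abel

theorem mul_add_mul_transpose_apply_self {A X : Matrix n n R} (hX : Xᵀ = X) (i : n) :
    (A * X + X * Aᵀ) i i = 2 * (A * X) i i := by
  have : (X * Aᵀ) i i = (A * X) i i := by
    rw [← transpose_apply (A * X), transpose_mul, hX]
  rw [Matrix.add_apply, this, two_mul]

theorem Matrix.IsDiag.add_add_mul_apply_self [DecidableEq n] {D : Matrix n n R} (hD : D.IsDiag)
    (K M X : Matrix n n R) (i : n) :
    ((D + K + M) * X) i i = D i i * X i i + ∑ k, (K i k + M i k) * X k i := by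
  have hDX : (D * X) i i = D i i * X i i := by
    conv_lhs => rw [← hD.diagonal_diag]
    rw [diagonal_mul, diag_apply]
  rw [add_assoc, Matrix.add_mul, Matrix.add_apply, hDX, mul_apply]
  simp only [Matrix.add_apply]

end Congruence

theorem transpose_mul_mul_eq_of_symm_part_eq {𝕜 : Type*} [Field 𝕜] [CharZero 𝕜]
    {n : Type*} [Fintype n] [DecidableEq n] {S J L : Matrix n n 𝕜} (hS : Sᵀ * S = 1)
    (hdecomp : (1 / 2 : 𝕜) • (J + Jᵀ) = S * L * Sᵀ) :
    Sᵀ * J * S = L + Sᵀ * ((1 / 2 : 𝕜) • (J - Jᵀ)) * S := by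
  have hJ : J = (1 / 2 : 𝕜) • (J + Jᵀ) + (1 / 2 : 𝕜) • (J - Jᵀ) := by module
  conv_lhs => rw [hJ, Matrix.mul_add, Matrix.add_mul, hdecomp]
  rw [show Sᵀ * (S * L * Sᵀ) * S = (Sᵀ * S) * L * (Sᵀ * S) by noncomm_ring, hS,
    Matrix.one_mul, Matrix.mul_one]

theorem stmt_14_general {n : ℕ}
    (J B Sg S LH : ℝ → Matrix (Fin n) (Fin n) ℝ)
    (S' : Matrix (Fin n) (Fin n) ℝ) (t : ℝ)
    (hSg : HasDerivAt Sg (J t * Sg t + Sg t * (J t)ᵀ + B t) t)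
    (hS : HasDerivAt S S' t)
    (horth : ∀ᶠ s in nhds t, (S s)ᵀ * S s = 1)
    (hLHdiag : (LH t).IsDiag)
    (hdecomp : (1 / 2 : ℝ) • (J t + (J t)ᵀ) = S t * LH t * (S t)ᵀ)
    (hSgsym : (Sg t)ᵀ = Sg t)
    (i : Fin n) :
    HasDerivAt (fun s => ((S s)ᵀ * Sg s * S s) i i)
      (2 * LH t i i * ((S t)ᵀ * Sg t * S t) i i
        + ((S t)ᵀ * B t * S t) i i
        + 2 * ∑ k, (((S t)ᵀ * ((1 / 2 : ℝ) • (J t - (J t)ᵀ)) * S t) i k + (S'ᵀ * S t) i k)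
            * ((S t)ᵀ * Sg t * S t) k i) t := by
  have hSS : (S t)ᵀ * S t = 1 := horth.self_of_nhds
  have hSgH : ((S t)ᵀ * Sg t * S t)ᵀ = (S t)ᵀ * Sg t * S t := by
    simp only [transpose_mul, transpose_transpose, hSgsym, Matrix.mul_assoc]
  refine ((hS.matrix_transpose_mul_mul hSg).matrix_apply i i).congr_deriv ?_
  rw [transpose_mul_lyapunov_mul_of_orthogonal hSS, Matrix.add_apply,
    mul_add_mul_transpose_apply_self hSgH, transpose_mul_mul_eq_of_symm_part_eq hSS hdecomp,
    hLHdiag.add_add_mul_apply_self]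
  ring

theorem stmt_14 {n : ℕ} (hn : 1 ≤ n)
    (J B Sg S LH : ℝ → Matrix (Fin n) (Fin n) ℝ)
    (S' : Matrix (Fin n) (Fin n) ℝ) (t : ℝ)
    (hSg : HasDerivAt Sg (J t * Sg t + Sg t * (J t)ᵀ + B t) t)
    (hS : HasDerivAt S S' t)
    (horth : ∀ᶠ s in nhds t, (S s)ᵀ * S s = 1)
    (hLHdiag : (LH t).IsDiag)
    (hdecomp : (1 / 2 : ℝ) • (J t + (J t)ᵀ) = S t * LH t * (S t)ᵀ)
    (hSgsym : (Sg t)ᵀ = Sg t)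
    (i : Fin n) :
    HasDerivAt (fun s => ((S s)ᵀ * Sg s * S s) i i)
      (2 * LH t i i * ((S t)ᵀ * Sg t * S t) i i
        + ((S t)ᵀ * B t * S t) i i
        + 2 * ∑ k, (((S t)ᵀ * ((1 / 2 : ℝ) • (J t - (J t)ᵀ)) * S t) i k + (S'ᵀ * S t) i k)
            * ((S t)ᵀ * Sg t * S t) k i) t :=
  stmt_14_general J B Sg S LH S' t hSg hS horth hLHdiag hdecomp hSgsym i
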